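/- Assume n ≥ 2, u* ∈ bd K_{n+1}, H ∩ int K_{n+1} = ∅, and H ∩ bd K_{n+1} = {u*}. Let u = u* + B t ∈ H with u ≠ u*, and assume u ∉ K_{n+1}. Write u = (u₀; u₁) ∈ ℝ × ℝⁿ (so u₁ ≠ 0), and set λ₁ = (u₀ + ‖u₁‖)/√2 and e₁ = (1/√2)(1; u₁/‖u₁‖). Let v be the unique nearest point of K_{n+1} to u and let ũ be the unique nearest point of H to v; assume ũ ∉ K_{n+1}. Then ũ = u* + B t̃ with t̃ = Bᵀ(λ₁ e₁ − u*). -/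

import Mathlib

/-- Euclidean norm of the tail `x₁` of `x = (x₀; x₁) ∈ ℝ × ℝⁿ`. -/
noncomputable def tailNorm {n : ℕ} (x : EuclideanSpace ℝ (Fin (n + 1))) : ℝ :=
  Real.sqrt (∑ i : Fin n, x i.succ ^ 2)

/-- The second-order cone `K_{n+1} = {(x₀; x₁) : ‖x₁‖ ≤ x₀}`. -/
def soc (n : ℕ) : Set (EuclideanSpace ℝ (Fin (n + 1))) :=
  {x | tailNorm x ≤ x 0}

/-- The boundary of the second-order cone: `{(x₀; x₁) : ‖x₁‖ = x₀}`. -/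
def socBd (n : ℕ) : Set (EuclideanSpace ℝ (Fin (n + 1))) :=
  {x | tailNorm x = x 0}

/-- The interior of the second-order cone: `{(x₀; x₁) : ‖x₁‖ < x₀}`. -/
def socInt (n : ℕ) : Set (EuclideanSpace ℝ (Fin (n + 1))) :=
  {x | tailNorm x < x 0}

/-- `x̂ = (x₀; −x₁)` for `x = (x₀; x₁)`. -/
def socHat {n : ℕ} (x : EuclideanSpace ℝ (Fin (n + 1))) : EuclideanSpace ℝ (Fin (n + 1)) :=
  WithLp.toLp 2 (fun i => if i = 0 then x 0 else -(x i))

/-- `B t` viewed as an element of Euclidean space. -/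
def mvE {m p : ℕ} (B : Matrix (Fin m) (Fin p) ℝ) (t : Fin p → ℝ) : EuclideanSpace ℝ (Fin m) :=
  WithLp.toLp 2 (fun i => B.mulVec t i)

/-- A Euclidean vector viewed as a plain function. -/
def toFun {m : ℕ} (x : EuclideanSpace ℝ (Fin m)) : Fin m → ℝ := x

/-!
If `-u ∈ K`, then the reflection `2u* - u` of `u` through `u*` lies in `H ∩ K = {u*}` (the cone
`K` is closed under sums and `H` misses its interior), forcing `u = u* ∈ K`. Hence
`u₀ + ‖u₁‖ > 0`, and with `c = u₁ / ‖u₁‖` the spectral decomposition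
`u = α (1; c) + β (-1; c)` has `α, β > 0`. The vector `(-1; c)` is orthogonal to `(1; c)` and
makes an obtuse angle with every point of `K`, so the obtuse-angle criterion identifies
`P_K(u) = α (1; c) = λ₁ e₁`. Finally `P_H(y) = u* + B Bᵀ (y - u*)`, since the residual is
orthogonal to the range of `B`.
-/

open scoped RealInnerProductSpace Matrix

theorem eq_of_inner_nonneg_of_norm_sub_le {E : Type*} [NormedAddCommGroup E]
    [InnerProductSpace ℝ E] {a v w : E} (hinner : 0 ≤ ⟪a - w, w - v⟫)
    (hnorm : ‖a - v‖ ≤ ‖a - w‖) : v = w := by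
  have hexpand : ‖a - v‖ ^ 2 = ‖a - w‖ ^ 2 + 2 * ⟪a - w, w - v⟫ + ‖w - v‖ ^ 2 := by
    rw [← norm_add_sq_real, sub_add_sub_cancel]
  have hwv : ‖w - v‖ = 0 := by
    nlinarith [norm_nonneg (a - v), norm_nonneg (a - w), norm_nonneg (w - v)]
  exact (sub_eq_zero.mp (norm_eq_zero.mp hwv)).symm

section SecondOrderCone

variable {n : ℕ}

def socTail (x : EuclideanSpace ℝ (Fin (n + 1))) : EuclideanSpace ℝ (Fin n) :=
  WithLp.toLp 2 fun i => x i.succ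

def socMk (a : ℝ) (y : EuclideanSpace ℝ (Fin n)) : EuclideanSpace ℝ (Fin (n + 1)) :=
  WithLp.toLp 2 (Fin.cons a y)

@[simp] theorem socTail_apply (x : EuclideanSpace ℝ (Fin (n + 1))) (i : Fin n) :
    socTail x i = x i.succ := rfl

@[simp] theorem socMk_apply_zero (a : ℝ) (y : EuclideanSpace ℝ (Fin n)) : socMk a y 0 = a := rfl

@[simp] theorem socMk_apply_succ (a : ℝ) (y : EuclideanSpace ℝ (Fin n)) (i : Fin n) :
    socMk a y i.succ = y i := rfl

@[simp] theorem socTail_socMk (a : ℝ) (y : EuclideanSpace ℝ (Fin n)) : socTail (socMk a y) = y :=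
  rfl

theorem tailNorm_eq_norm_socTail (x : EuclideanSpace ℝ (Fin (n + 1))) :
    tailNorm x = ‖socTail x‖ := by
  simp [tailNorm, EuclideanSpace.norm_eq, sq_abs]

theorem inner_eq_mul_add_inner_socTail (x y : EuclideanSpace ℝ (Fin (n + 1))) :
    ⟪x, y⟫ = x 0 * y 0 + ⟪socTail x, socTail y⟫ := by
  simp only [PiLp.inner_apply, Fin.sum_univ_succ, socTail_apply, RCLike.inner_apply, conj_trivial]
  ring

theorem mem_soc_iff_norm_socTail_le {x : EuclideanSpace ℝ (Fin (n + 1))} :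
    x ∈ soc n ↔ ‖socTail x‖ ≤ x 0 := by
  rw [← tailNorm_eq_norm_socTail]; rfl

theorem add_mem_soc {x y : EuclideanSpace ℝ (Fin (n + 1))} (hx : x ∈ soc n) (hy : y ∈ soc n) :
    x + y ∈ soc n := by
  rw [mem_soc_iff_norm_socTail_le] at *
  exact (norm_add_le (socTail x) (socTail y)).trans (add_le_add hx hy)

theorem smul_mem_soc {c : ℝ} (hc : 0 ≤ c) {x : EuclideanSpace ℝ (Fin (n + 1))} (hx : x ∈ soc n) :
    c • x ∈ soc n := by
  rw [mem_soc_iff_norm_socTail_le] at *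
  change ‖c • socTail x‖ ≤ c * x 0
  rw [norm_smul, Real.norm_of_nonneg hc]
  exact mul_le_mul_of_nonneg_left hx hc

theorem neg_mem_soc_iff {x : EuclideanSpace ℝ (Fin (n + 1))} :
    -x ∈ soc n ↔ x 0 + tailNorm x ≤ 0 := by
  rw [mem_soc_iff_norm_socTail_le, tailNorm_eq_norm_socTail]
  change ‖-socTail x‖ ≤ -x 0 ↔ _
  rw [norm_neg]
  constructor <;> intro h <;> linarith

theorem inner_socMk_neg_one_nonpos {c : EuclideanSpace ℝ (Fin n)} (hc : ‖c‖ = 1)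
    {y : EuclideanSpace ℝ (Fin (n + 1))} (hy : y ∈ soc n) : ⟪socMk (-1) c, y⟫ ≤ 0 := by
  have hCS := real_inner_le_norm c (socTail y)
  rw [inner_eq_mul_add_inner_socTail, socMk_apply_zero, socTail_socMk]
  rw [hc] at hCS
  linarith [mem_soc_iff_norm_socTail_le.mp hy]

theorem eq_smul_socMk_of_isNearest_soc {x v : EuclideanSpace ℝ (Fin (n + 1))}
    (hpos : 0 < x 0 + tailNorm x) (hout : x 0 < tailNorm x) (hv : v ∈ soc n)
    (hnear : ∀ w ∈ soc n, ‖x - v‖ ≤ ‖x - w‖) :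
    v = ((x 0 + tailNorm x) / 2) • socMk 1 ((tailNorm x)⁻¹ • socTail x) := by
  set N := tailNorm x with hNdef
  have hN : 0 < N := by linarith
  set c := N⁻¹ • socTail x
  have hc : ‖c‖ = 1 := by
    rw [norm_smul, ← tailNorm_eq_norm_socTail, ← hNdef, norm_inv, Real.norm_of_nonneg hN.le,
      inv_mul_cancel₀ hN.ne']
  set α := (x 0 + N) / 2
  set β := (N - x 0) / 2
  have hdecomp : x - α • socMk 1 c = β • socMk (-1) c := by
    ext i
    refine Fin.cases ?_ (fun i => ?_) i
    · simp only [PiLp.sub_apply, PiLp.smul_apply, socMk_apply_zero, smul_eq_mul, mul_one, mul_neg,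
        α, β]
      ring
    · simp only [PiLp.sub_apply, PiLp.smul_apply, socMk_apply_succ, socTail_apply, smul_eq_mul,
        α, β, c]
      field_simp
      ring
  have hd : socMk 1 c ∈ soc n := by
    rw [mem_soc_iff_norm_socTail_le, socTail_socMk, hc, socMk_apply_zero]
  have horth : ⟪socMk (-1) c, socMk 1 c⟫ = 0 := by
    simp only [inner_eq_mul_add_inner_socTail, socTail_socMk, socMk_apply_zero,
      real_inner_self_eq_norm_sq, hc]
    ring
  refine eq_of_inner_nonneg_of_norm_sub_le ?_ (hnear _ (smul_mem_soc (by positivity) hd))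
  rw [hdecomp, real_inner_smul_left, inner_sub_right, real_inner_smul_right, horth]
  have hβ : 0 ≤ β := by simp only [β]; linarith
  nlinarith [inner_socMk_neg_one_nonpos hc hv]

theorem apply_zero_add_tailNorm_pos {H : Set (EuclideanSpace ℝ (Fin (n + 1)))}
    {x₀ u : EuclideanSpace ℝ (Fin (n + 1))} (hx₀ : x₀ ∈ soc n) (hreflect : 2 • x₀ - u ∈ H)
    (hdisj : H ∩ socInt n = ∅) (hsingle : H ∩ socBd n = {x₀}) (hu : u ∉ soc n) :
    0 < u 0 + tailNorm u := by
  by_contra hle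
  have hmem : 2 • x₀ - u ∈ soc n := by
    rw [sub_eq_add_neg, two_smul]
    exact add_mem_soc (add_mem_soc hx₀ hx₀) (neg_mem_soc_iff.mpr (not_lt.mp hle))
  rcases (show tailNorm _ ≤ _ from hmem).eq_or_lt with hbd | hint
  · have hfix : 2 • x₀ - u ∈ H ∩ socBd n := ⟨hreflect, hbd⟩
    rw [hsingle, Set.mem_singleton_iff, two_smul, sub_eq_iff_eq_add, add_left_cancel_iff] at hfix
    exact hu (hfix ▸ hx₀)
  · have hbad : 2 • x₀ - u ∈ H ∩ socInt n := ⟨hreflect, hint⟩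
    rw [hdisj] at hbad
    exact hbad

end SecondOrderCone

section AffineProjection

variable {m p : ℕ} (B : Matrix (Fin m) (Fin p) ℝ)

theorem mvE_sub (r s : Fin p → ℝ) : mvE B (r - s) = mvE B r - mvE B s := by
  ext
  simp [mvE, Matrix.mulVec_sub]

theorem mvE_neg (r : Fin p → ℝ) : mvE B (-r) = -mvE B r := by
  ext
  simp [mvE, Matrix.mulVec_neg]

theorem inner_mvE (x : EuclideanSpace ℝ (Fin m)) (r : Fin p → ℝ) :
    ⟪x, mvE B r⟫ = Bᵀ *ᵥ toFun x ⬝ᵥ r := by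
  rw [EuclideanSpace.inner_eq_star_dotProduct, Matrix.mulVec_transpose, ← Matrix.dotProduct_mulVec,
    dotProduct_comm]
  rfl

variable {B}

theorem transpose_mulVec_mvE (hB : Bᵀ * B = 1) (r : Fin p → ℝ) : Bᵀ *ᵥ toFun (mvE B r) = r := by
  simp [toFun, mvE, Matrix.mulVec_mulVec, hB]

theorem eq_of_isNearest_affine (hB : Bᵀ * B = 1) {x₀ y : EuclideanSpace ℝ (Fin m)}
    (s : Fin p → ℝ)
    (hnear : ‖y - (x₀ + mvE B s)‖ ≤ ‖y - (x₀ + mvE B (Bᵀ *ᵥ toFun (y - x₀)))‖) :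
    x₀ + mvE B s = x₀ + mvE B (Bᵀ *ᵥ toFun (y - x₀)) := by
  set q := Bᵀ *ᵥ toFun (y - x₀)
  have hperp : ⟪y - (x₀ + mvE B q), mvE B (q - s)⟫ = 0 := by
    have hres : Bᵀ *ᵥ toFun (y - (x₀ + mvE B q)) = 0 := by
      rw [← sub_sub, show toFun (y - x₀ - mvE B q) = toFun (y - x₀) - toFun (mvE B q) from rfl,
        Matrix.mulVec_sub, transpose_mulVec_mvE hB, sub_self]
    rw [inner_mvE, hres, zero_dotProduct]
  refine eq_of_inner_nonneg_of_norm_sub_le ?_ hnear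
  rw [add_sub_add_left_eq_sub, ← mvE_sub, hperp]

end AffineProjection

theorem stmt12_general (n p : ℕ)
    (B : Matrix (Fin (n + 1)) (Fin p) ℝ) (hB : B.transpose * B = 1)
    (ustar : EuclideanSpace ℝ (Fin (n + 1))) (hustar : ustar ∈ socBd n)
    (H : Set (EuclideanSpace ℝ (Fin (n + 1))))
    (hH : H = {u | ∃ t : Fin p → ℝ, u = ustar + mvE B t})
    (hdisj : H ∩ socInt n = ∅)
    (hsingle : H ∩ socBd n = {ustar})
    (u : EuclideanSpace ℝ (Fin (n + 1))) (t : Fin p → ℝ)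
    (hu : u = ustar + mvE B t) (huK : u ∉ soc n)
    (lam1 : ℝ) (hlam1 : lam1 = (u 0 + tailNorm u) / Real.sqrt 2)
    (e1 : EuclideanSpace ℝ (Fin (n + 1)))
    (he1 : e1 = fun i => if i = 0 then 1 / Real.sqrt 2
      else (1 / Real.sqrt 2) * (u i / tailNorm u))
    (v : EuclideanSpace ℝ (Fin (n + 1)))
    (hv : v ∈ soc n) (hvnear : ∀ w ∈ soc n, ‖u - v‖ ≤ ‖u - w‖)
    (ut : EuclideanSpace ℝ (Fin (n + 1)))
    (hut : ut ∈ H) (hutnear : ∀ w ∈ H, ‖v - ut‖ ≤ ‖v - w‖) :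
    ut = ustar + mvE B (B.transpose.mulVec (toFun (lam1 • e1 - ustar))) := by
  subst hH
  have hreflect : 2 • ustar - u ∈ {u | ∃ t : Fin p → ℝ, u = ustar + mvE B t} :=
    ⟨-t, by rw [hu, mvE_neg, two_smul]; abel⟩
  have hpos := apply_zero_add_tailNorm_pos (Eq.le hustar) hreflect hdisj hsingle huK
  have hvproj : v = lam1 • e1 := by
    rw [eq_smul_socMk_of_isNearest_soc hpos (not_le.mp huK) hv hvnear]
    ext i
    refine Fin.cases ?_ (fun i => ?_) i
    · simp only [PiLp.smul_apply, socMk_apply_zero, smul_eq_mul, mul_one, hlam1, he1,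
        ↓reduceIte, one_div]
      field_simp
      exact Real.sq_sqrt zero_le_two
    · simp only [PiLp.smul_apply, socMk_apply_succ, socTail_apply, smul_eq_mul, hlam1, he1,
        Fin.succ_ne_zero, ↓reduceIte, one_div]
      field_simp
      rw [Real.sq_sqrt zero_le_two, mul_comm]
  obtain ⟨s, rfl⟩ := hut
  rw [← hvproj]
  exact eq_of_isNearest_affine hB s (hutnear _ ⟨_, rfl⟩)

/-- One iteration of the alternating projection method: with `H ∩ bd K_{n+1} = {u*}`,
`u = u* + B t ∈ H`, `u ≠ u*`, `u ∉ K_{n+1}`, if `v = P_K(u)` and `ũ = P_H(v) ∉ K_{n+1}`,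
then `ũ = u* + B t̃` with `t̃ = Bᵀ(λ₁ e₁ − u*)`, where `λ₁ = (u₀ + ‖u₁‖)/√2` and
`e₁ = (1/√2)(1; u₁/‖u₁‖)`. -/
theorem stmt12 (n p : ℕ) (hn : 2 ≤ n)
    (B : Matrix (Fin (n + 1)) (Fin p) ℝ) (hB : B.transpose * B = 1)
    (ustar : EuclideanSpace ℝ (Fin (n + 1))) (hustar : ustar ∈ socBd n)
    (H : Set (EuclideanSpace ℝ (Fin (n + 1))))
    (hH : H = {u | ∃ t : Fin p → ℝ, u = ustar + mvE B t})
    (hdisj : H ∩ socInt n = ∅)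
    (hsingle : H ∩ socBd n = {ustar})
    (u : EuclideanSpace ℝ (Fin (n + 1))) (t : Fin p → ℝ)
    (hu : u = ustar + mvE B t) (hune : u ≠ ustar) (huK : u ∉ soc n)
    (lam1 : ℝ) (hlam1 : lam1 = (u 0 + tailNorm u) / Real.sqrt 2)
    (e1 : EuclideanSpace ℝ (Fin (n + 1)))
    (he1 : e1 = fun i => if i = 0 then 1 / Real.sqrt 2
      else (1 / Real.sqrt 2) * (u i / tailNorm u))
    (v : EuclideanSpace ℝ (Fin (n + 1)))
    (hv : v ∈ soc n) (hvnear : ∀ w ∈ soc n, ‖u - v‖ ≤ ‖u - w‖)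
    (ut : EuclideanSpace ℝ (Fin (n + 1)))
    (hut : ut ∈ H) (hutnear : ∀ w ∈ H, ‖v - ut‖ ≤ ‖v - w‖)
    (hutK : ut ∉ soc n) :
    ut = ustar + mvE B (B.transpose.mulVec (toFun (lam1 • e1 - ustar))) :=
  stmt12_general n p B hB ustar hustar H hH hdisj hsingle u t hu huK lam1 hlam1 e1 he1 v hv hvnear
    ut hut hutnear
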